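/- Suppose x(k+1) = W x(k) + ε(k) where W = I - γL for a connected undirected graph with 0 < γ < 1/d_m, and ‖ε(k)‖_∞ ≤ α ρ^k with α > 0, ρ ∈ [0,1), and ∑_{k=0}^∞ ∑_{i=1}^N ε_i(k) = 0. Then every coordinate x_j(k) converges to the average (1/N)∑_{i=1}^N x_i(0). -/

import Mathlib

open Matrix Finset Filter SimpleGraph
open scoped Topology

/-!
`W = 1 - γ L` is symmetric and fixes the constant vectors, so it preserves the coordinate sum.
On zero-sum vectors it is a strict Euclidean contraction:
`‖W v‖² = ‖v‖² - 2γ vᵀLv + γ² ‖Lv‖²`, where `‖Lv‖² ≤ 2 d_m vᵀLv` by Cauchy–Schwarz and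
`vᵀLv > 0` by connectivity; compactness of the unit sphere makes the contraction factor
uniform, `σ < 1`. The total `∑ᵢ xᵢ(k)` moves only by `∑ᵢ εᵢ(k)`, so it converges to
`∑ᵢ xᵢ(0)`, while the deviation `y(k)` from the mean obeys `‖y(k+1)‖ ≤ σ ‖y(k)‖ + ‖δ(k)‖`,
`δ(k)` being the deviation of `ε(k)` from its mean, which tends to zero; hence so does `y(k)`.
-/

theorem tendsto_zero_of_le_mul_add {u b : ℕ → ℝ} {σ : ℝ} (hσ0 : 0 ≤ σ) (hσ1 : σ < 1)
    (hu : ∀ k, 0 ≤ u k) (hb : Tendsto b atTop (𝓝 0))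
    (hrec : ∀ k, u (k + 1) ≤ σ * u k + b k) : Tendsto u atTop (𝓝 0) := by
  rw [Metric.tendsto_atTop]
  intro η hη
  obtain ⟨K, hK⟩ : ∃ K, ∀ k ≥ K, b k ≤ (1 - σ) * (η / 2) :=
    eventually_atTop.1 (hb.eventually (ge_mem_nhds (by nlinarith)))
  -- past `K`, the excess of `u` over `η / 2` decays geometrically
  have hgeom : ∀ n, u (K + n) - η / 2 ≤ σ ^ n * |u K - η / 2| := by
    intro n
    induction n with
    | zero => simpa using le_abs_self (u K - η / 2)
    | succ n ih =>
      have := hrec (K + n)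
      have := hK (K + n) (by omega)
      rw [pow_succ', mul_assoc, ← add_assoc]
      nlinarith
  obtain ⟨n₀, hn₀⟩ : ∃ n₀, ∀ n ≥ n₀, σ ^ n * |u K - η / 2| < η / 2 :=
    eventually_atTop.1 (((tendsto_pow_atTop_nhds_zero_of_lt_one hσ0 hσ1).mul_const _).eventually
      (gt_mem_nhds (by simpa using half_pos hη)))
  refine ⟨K + n₀, fun k hk => ?_⟩
  obtain ⟨n, rfl⟩ := Nat.exists_eq_add_of_le (le_trans (Nat.le_add_right K n₀) hk)
  rw [Real.dist_0_eq_abs, abs_of_nonneg (hu _)]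
  linarith [hgeom n, hn₀ n (by omega)]

theorem ContinuousLinearMap.opNorm_lt_one_of_norm_lt {E F : Type*} [NormedAddCommGroup E]
    [NormedSpace ℝ E] [FiniteDimensional ℝ E] [SeminormedAddCommGroup F] [NormedSpace ℝ F]
    (T : E →L[ℝ] F) (h : ∀ v ≠ 0, ‖T v‖ < ‖v‖) : ‖T‖ < 1 := by
  rcases subsingleton_or_nontrivial E with hE | hE
  · simp [Subsingleton.elim T 0]
  obtain ⟨v₀, hv₀, hmax⟩ := (isCompact_sphere (0 : E) 1).exists_isMaxOn
    (NormedSpace.sphere_nonempty.2 zero_le_one) (continuous_norm.comp T.continuous).continuousOn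
  rw [mem_sphere_zero_iff_norm] at hv₀
  calc ‖T‖ ≤ ‖T v₀‖ := T.opNorm_le_of_unit_norm (norm_nonneg _) fun v hv =>
        hmax (mem_sphere_zero_iff_norm.2 hv)
    _ < 1 := hv₀ ▸ h v₀ (norm_ne_zero_iff.1 (by simp [hv₀]))

theorem tendsto_smul_of_perturbed_consensus {E : Type*} [NormedAddCommGroup E] [NormedSpace ℝ E]
    (T : E →ₗ[ℝ] E) (φ : E →ₗ[ℝ] ℝ) (c : E) (hφT : ∀ v, φ (T v) = φ v) (hTc : T c = c)
    (hφc : φ c = 1) {σ : ℝ} (hσ0 : 0 ≤ σ) (hσ1 : σ < 1) (hT : ∀ v, φ v = 0 → ‖T v‖ ≤ σ * ‖v‖)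
    (x ε : ℕ → E) (hdyn : ∀ k, x (k + 1) = T (x k) + ε k) (hε : Tendsto ε atTop (𝓝 0))
    (hsum : HasSum (fun k => φ (ε k)) 0) : Tendsto x atTop (𝓝 (φ (x 0) • c)) := by
  set a : ℕ → ℝ := fun k => φ (x k)
  have ha_eq : ∀ k, a k = a 0 + ∑ l ∈ range k, φ (ε l) := by
    intro k
    induction k with
    | zero => simp
    | succ k ih => simp only [a, hdyn, map_add, hφT, sum_range_succ] at ih ⊢; rw [ih]; ring
  have ha : Tendsto a atTop (𝓝 (a 0)) := by
    simpa [← ha_eq] using hsum.tendsto_sum_nat.const_add (a 0)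
  set y : ℕ → E := fun k => x k - a k • c
  have hy_ker : ∀ k, φ (y k) = 0 := by simp [y, a, hφc]
  have hy_succ : ∀ k, y (k + 1) = T (y k) + (ε k - φ (ε k) • c) := by
    intro k
    simp only [y, a, hdyn, map_add, map_sub, map_smul, hφT, hTc, add_smul]
    abel
  have hy : Tendsto y atTop (𝓝 0) := by
    rw [tendsto_zero_iff_norm_tendsto_zero]
    refine tendsto_zero_of_le_mul_add (b := fun k => ‖ε k - φ (ε k) • c‖) hσ0 hσ1
      (fun _ => norm_nonneg _) ?_ fun k => ?_
    · simpa using (hε.sub (hsum.summable.tendsto_atTop_zero.smul_const c)).norm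
    · rw [hy_succ]
      exact (norm_add_le _ _).trans (by gcongr; exact hT _ (hy_ker k))
  simpa [y] using hy.add (ha.smul_const c)

namespace SimpleGraph

theorem sup_degree_eq_maxDegree {V : Type*} [Fintype V] (G : SimpleGraph V)
    [DecidableRel G.Adj] : (univ.sup fun i => G.degree i) = G.maxDegree :=
  le_antisymm (Finset.sup_le fun i _ => G.degree_le_maxDegree i)
    (G.maxDegree_le_of_forall_degree_le _ fun i => le_sup (f := fun i => G.degree i) (mem_univ i))

variable {V : Type*} [Fintype V] [DecidableEq V] (G : SimpleGraph V) [DecidableRel G.Adj]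

theorem lapMatrix_mulVec_apply_eq_sum (v : V → ℝ) (i : V) :
    (G.lapMatrix ℝ *ᵥ v) i = ∑ j ∈ G.neighborFinset i, (v i - v j) := by
  rw [lapMatrix_mulVec_apply, sum_sub_distrib, sum_const, card_neighborFinset_eq_degree,
    nsmul_eq_mul]

theorem lapMatrix_mulVec_const (a : ℝ) : G.lapMatrix ℝ *ᵥ (fun _ => a) = 0 := by
  ext i
  simp [lapMatrix_mulVec_apply_eq_sum]

theorem dotProduct_lapMatrix_mulVec_eq_sum (v : V → ℝ) :
    v ⬝ᵥ (G.lapMatrix ℝ *ᵥ v) = (∑ i, ∑ j ∈ G.neighborFinset i, (v i - v j) ^ 2) / 2 := by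
  rw [← toLinearMap₂'_apply', lapMatrix_toLinearMap₂']
  simp [neighborFinset_eq_filter, sum_filter]

theorem sum_lapMatrix_mulVec (v : V → ℝ) : ∑ i, (G.lapMatrix ℝ *ᵥ v) i = 0 := by
  calc ∑ i, (G.lapMatrix ℝ *ᵥ v) i = (fun _ => 1) ⬝ᵥ (G.lapMatrix ℝ *ᵥ v) := by simp [dotProduct]
    _ = 0 := by
      rw [dotProduct_mulVec, ← mulVec_transpose, (G.isSymm_lapMatrix ℝ).eq,
        lapMatrix_mulVec_const_eq_zero, zero_dotProduct]

theorem lapMatrix_mulVec_dotProduct_self_le (v : V → ℝ) :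
    (G.lapMatrix ℝ *ᵥ v) ⬝ᵥ (G.lapMatrix ℝ *ᵥ v) ≤
      2 * G.maxDegree * (v ⬝ᵥ (G.lapMatrix ℝ *ᵥ v)) := by
  calc (G.lapMatrix ℝ *ᵥ v) ⬝ᵥ (G.lapMatrix ℝ *ᵥ v)
      = ∑ i, (∑ j ∈ G.neighborFinset i, (v i - v j)) ^ 2 := by
        simp only [dotProduct, lapMatrix_mulVec_apply_eq_sum, sq]
    _ ≤ ∑ i, (G.degree i : ℝ) * ∑ j ∈ G.neighborFinset i, (v i - v j) ^ 2 := by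
        gcongr with i
        simpa using sq_sum_le_card_mul_sum_sq (s := G.neighborFinset i) (f := fun j => v i - v j)
    _ ≤ ∑ i, (G.maxDegree : ℝ) * ∑ j ∈ G.neighborFinset i, (v i - v j) ^ 2 := by
        gcongr with i
        exact_mod_cast G.degree_le_maxDegree i
    _ = 2 * G.maxDegree * (v ⬝ᵥ (G.lapMatrix ℝ *ᵥ v)) := by
        rw [dotProduct_lapMatrix_mulVec_eq_sum, ← mul_sum]
        ring

theorem dotProduct_lapMatrix_mulVec_pos (hconn : G.Connected) {v : V → ℝ}
    (hsum : ∑ i, v i = 0) (hv : v ≠ 0) : 0 < v ⬝ᵥ (G.lapMatrix ℝ *ᵥ v) := by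
  refine lt_of_le_of_ne (by simpa using (posSemidef_lapMatrix ℝ G).dotProduct_mulVec_nonneg v)
    fun h0 => hv ?_
  rw [eq_comm, ← toLinearMap₂'_apply',
    lapMatrix_toLinearMap₂'_apply'_eq_zero_iff_forall_reachable] at h0
  obtain ⟨i₀⟩ := hconn.nonempty
  have hconst : ∀ i, v i = v i₀ := fun i => h0 i i₀ (hconn.preconnected i i₀)
  have : (Fintype.card V : ℝ) * v i₀ = 0 := by simpa [hconst] using hsum
  ext i
  simpa [hconst i, (Fintype.card_pos_iff.2 ⟨i₀⟩).ne'] using this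

theorem dotProduct_self_one_sub_smul_lapMatrix_mulVec_lt (hconn : G.Connected) {γ : ℝ}
    (hγ0 : 0 < γ) (hγ : γ * G.maxDegree < 1) {v : V → ℝ} (hsum : ∑ i, v i = 0) (hv : v ≠ 0) :
    ((1 - γ • G.lapMatrix ℝ) *ᵥ v) ⬝ᵥ ((1 - γ • G.lapMatrix ℝ) *ᵥ v) < v ⬝ᵥ v := by
  set L := G.lapMatrix ℝ
  have hq := G.dotProduct_lapMatrix_mulVec_pos hconn hsum hv
  have hsq := G.lapMatrix_mulVec_dotProduct_self_le v
  have hexp : ((1 - γ • L) *ᵥ v) ⬝ᵥ ((1 - γ • L) *ᵥ v)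
      = v ⬝ᵥ v - 2 * γ * (v ⬝ᵥ (L *ᵥ v)) + γ ^ 2 * ((L *ᵥ v) ⬝ᵥ (L *ᵥ v)) := by
    simp only [sub_mulVec, one_mulVec, smul_mulVec, sub_dotProduct, dotProduct_sub,
      smul_dotProduct, dotProduct_smul, smul_eq_mul, dotProduct_comm (L *ᵥ v) v]
    ring
  rw [hexp]
  nlinarith [mul_pos (mul_pos hγ0 hq) (sub_pos.2 hγ), mul_le_mul_of_nonneg_left hsq (sq_nonneg γ)]

theorem exists_norm_toEuclideanCLM_one_sub_smul_lapMatrix_le (hconn : G.Connected) {γ : ℝ}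
    (hγ0 : 0 < γ) (hγ : γ * G.maxDegree < 1) :
    ∃ σ, 0 ≤ σ ∧ σ < 1 ∧ ∀ v : EuclideanSpace ℝ V, ∑ i, v i = 0 →
      ‖toEuclideanCLM (𝕜 := ℝ) (1 - γ • G.lapMatrix ℝ) v‖ ≤ σ * ‖v‖ := by
  set Z : Submodule ℝ (EuclideanSpace ℝ V) := LinearMap.ker (∑ i, EuclideanSpace.projₗ i)
  have hZ : ∀ v, v ∈ Z ↔ ∑ i, v i = 0 := by simp [Z]
  set T := (toEuclideanCLM (𝕜 := ℝ) (1 - γ • G.lapMatrix ℝ)).comp Z.subtypeL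
  refine ⟨‖T‖, T.opNorm_nonneg, T.opNorm_lt_one_of_norm_lt fun v hv => ?_,
    fun v hv => T.le_opNorm ⟨v, (hZ v).2 hv⟩⟩
  have := G.dotProduct_self_one_sub_smul_lapMatrix_mulVec_lt hconn hγ0 hγ ((hZ v).1 v.2)
    (v := WithLp.ofLp (v : EuclideanSpace ℝ V)) (by simpa using hv)
  rw [← sq_lt_sq₀ (norm_nonneg _) (norm_nonneg _)]
  simp only [T, ContinuousLinearMap.comp_apply, Submodule.subtypeL_apply, Submodule.coe_norm,
    EuclideanSpace.real_norm_sq_eq]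
  simpa only [ofLp_toEuclideanCLM, dotProduct, sq] using this

theorem tendsto_average_of_consensus_dynamics (hconn : G.Connected) {γ : ℝ}
    (hγ0 : 0 < γ) (hγ : γ * G.maxDegree < 1) (x ε : ℕ → V → ℝ)
    (hdyn : ∀ k, x (k + 1) = (1 - γ • G.lapMatrix ℝ) *ᵥ x k + ε k)
    (hε : Tendsto ε atTop (𝓝 0)) (hsum : HasSum (fun k => ∑ i, ε k i) 0) (j : V) :
    Tendsto (fun k => x k j) atTop (𝓝 ((∑ i, x 0 i) / Fintype.card V)) := by
  have hne : Nonempty V := hconn.nonempty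
  obtain ⟨σ, hσ0, hσ1, hσ⟩ := G.exists_norm_toEuclideanCLM_one_sub_smul_lapMatrix_le hconn hγ0 hγ
  let W := toEuclideanCLM (𝕜 := ℝ) (1 - γ • G.lapMatrix ℝ)
  let φ : EuclideanSpace ℝ V →ₗ[ℝ] ℝ := ∑ i, EuclideanSpace.projₗ i
  have hφ : ∀ v, φ v = ∑ i, v i := by simp [φ]
  let c : EuclideanSpace ℝ V := WithLp.toLp 2 (fun _ => (Fintype.card V : ℝ)⁻¹)
  have hWφ : ∀ v, φ (W v) = φ v := by
    simp [hφ, W, sum_sub_distrib, ← mul_sum, sum_lapMatrix_mulVec]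
  have hWc : W c = c := by
    simp [W, c, lapMatrix_mulVec_const]
  have hφc : φ c = 1 := by simp [hφ, c]
  have key := tendsto_smul_of_perturbed_consensus
    (W : EuclideanSpace ℝ V →ₗ[ℝ] EuclideanSpace ℝ V) φ c hWφ hWc hφc hσ0 hσ1
    (fun v hv => hσ v ((hφ v).symm.trans hv)) (fun k => WithLp.toLp 2 (x k))
    (fun k => WithLp.toLp 2 (ε k)) (fun k => by rw [hdyn]; rfl)
    (((PiLp.continuous_toLp 2 fun _ : V => ℝ).tendsto' 0 0 rfl).comp hε)
    (by simpa [hφ] using hsum)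
  simpa [Function.comp_def, hφ, c, div_eq_mul_inv] using
    ((PiLp.continuous_apply 2 _ j).tendsto _).comp key

end SimpleGraph

theorem stmt_5_general (N : ℕ) (G : SimpleGraph (Fin N)) [DecidableRel G.Adj]
    (hconn : G.Connected) (γ : ℝ)
    (hγ0 : 0 < γ) (hγ1 : γ < 1 / ((Finset.univ.sup fun i => G.degree i : ℕ) : ℝ))
    (W : Matrix (Fin N) (Fin N) ℝ) (hW : W = 1 - γ • G.lapMatrix ℝ)
    (x ε : ℕ → Fin N → ℝ)
    (hdyn : ∀ k, x (k + 1) = W.mulVec (x k) + ε k)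
    (α ρ : ℝ) (hρ0 : 0 ≤ ρ) (hρ1 : ρ < 1)
    (hbound : ∀ k i, |ε k i| ≤ α * ρ ^ k)
    (hzero : ∑' k : ℕ, ∑ i, ε k i = 0) :
    ∀ j : Fin N,
      Filter.Tendsto (fun k : ℕ => x k j) Filter.atTop (nhds ((∑ i, x 0 i) / N)) := by
  intro j
  subst hW
  rw [G.sup_degree_eq_maxDegree] at hγ1
  have hγ : γ * G.maxDegree < 1 := by
    rcases (Nat.cast_nonneg (α := ℝ) G.maxDegree).eq_or_lt with h | h
    · simp [← h]
    · rwa [lt_div_iff₀ h] at hγ1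
  have hgeom : Tendsto (fun k => α * ρ ^ k) atTop (𝓝 0) := by
    simpa using (tendsto_pow_atTop_nhds_zero_of_lt_one hρ0 hρ1).const_mul α
  have hε : Tendsto ε atTop (𝓝 0) :=
    tendsto_pi_nhds.2 fun i => squeeze_zero_norm (fun k => hbound k i) hgeom
  have hsummable : Summable fun k => ∑ i, ε k i := by
    refine .of_norm_bounded ((summable_geometric_of_lt_one hρ0 hρ1).mul_left (N * α)) fun k => ?_
    calc ‖∑ i, ε k i‖ ≤ ∑ i : Fin N, α * ρ ^ k :=
          (norm_sum_le _ _).trans (sum_le_sum fun i _ => hbound k i)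
      _ = N * α * ρ ^ k := by simp [mul_assoc]
  simpa using G.tendsto_average_of_consensus_dynamics hconn hγ0 hγ x ε hdyn hε
    (hzero ▸ hsummable.hasSum) j

/-- If `x(k+1) = W x(k) + ε(k)` with `W = I - γ L` for a connected graph, `0 < γ < 1/d_m`,
`‖ε(k)‖_∞ ≤ α ρ^k` with `α > 0`, `ρ ∈ [0,1)`, and the total input sums to zero, then every
coordinate of `x(k)` converges to the average of the initial states. -/
theorem stmt_5 (N : ℕ) [NeZero N] (G : SimpleGraph (Fin N)) [DecidableRel G.Adj]
    (hconn : G.Connected) (γ : ℝ)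
    (hγ0 : 0 < γ) (hγ1 : γ < 1 / ((Finset.univ.sup fun i => G.degree i : ℕ) : ℝ))
    (W : Matrix (Fin N) (Fin N) ℝ) (hW : W = 1 - γ • G.lapMatrix ℝ)
    (x ε : ℕ → Fin N → ℝ)
    (hdyn : ∀ k, x (k + 1) = W.mulVec (x k) + ε k)
    (α ρ : ℝ) (hα : 0 < α) (hρ0 : 0 ≤ ρ) (hρ1 : ρ < 1)
    (hbound : ∀ k i, |ε k i| ≤ α * ρ ^ k)
    (hzero : ∑' k : ℕ, ∑ i, ε k i = 0) :
    ∀ j : Fin N,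
      Filter.Tendsto (fun k : ℕ => x k j) Filter.atTop (nhds ((∑ i, x 0 i) / N)) :=
  stmt_5_general N G hconn γ hγ0 hγ1 W hW x ε hdyn α ρ hρ0 hρ1 hbound hzero
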